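/- There exists a constant C > 0 such that for all positive integers n and d, |f_n(d)| ≤ C · (log log(10 d))² / d, where f_n(d) = (χ(d)/φ(d)) λ(d)/λ(gcd(n,d)). -/

import Mathlib

/-!
`f_n(d)` vanishes for even `d`, and `λ(gcd(n,d)) ≥ 1`, so it suffices to bound
`λ(d)/φ(d) = d⁻¹ ∏_{p ∣ d} p/(p-2)` for odd `d`. Since `p/(p-2) ≤ exp (2/(p-2))`, the product
is controlled by `∑_{p ∣ d, p > 2} 1/(p-2)`. The prime factors of `d` above `K ≈ log 10d`
number at most `log d`, so they contribute `O(1)`; those below `K` contribute at most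
`∑_{p ≤ K} 1/p + O(1) ≤ log log log 10d + O(1)` by Mertens' theorem. Its upper half follows
from Legendre's formula and Chebyshev's `θ(x) ≤ x log 4`, which give
`∑_{p ≤ N} log p / p ≤ log N + log 4`, followed by partial summation.
-/

noncomputable def chi (d : ℕ) : ℝ := if d % 4 = 1 then 1 else if d % 4 = 3 then -1 else 0

noncomputable def lam (k : ℕ) : ℝ :=
  ∏ p ∈ k.primeFactors.filter (fun p => 2 < p), ((p : ℝ) - 1) / ((p : ℝ) - 2)

noncomputable def f (n d : ℕ) : ℝ :=
  (chi d / (Nat.totient d : ℝ)) * (lam d / lam (Nat.gcd n d))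

open Finset Real
open Nat (primesLE mem_primesLE)
open scoped Nat

theorem Nat.Prime.div_le_factorization_factorial {p : ℕ} (hp : p.Prime) (n : ℕ) :
    n / p ≤ (n !).factorization p := by
  have : Fact p.Prime := ⟨hp⟩
  calc n / p ≤ (p * (n / p))!.factorization p := by
        rw [Nat.factorization_def _ hp, padicValNat_factorial_mul]; omega
    _ ≤ (n !).factorization p :=
        (Nat.factorization_le_iff_dvd (Nat.factorial_ne_zero _) (Nat.factorial_ne_zero _)).mpr
          (Nat.factorial_dvd_factorial (Nat.mul_div_le n p)) p

theorem sum_primesLE_div_mul_log_le_log_factorial (n : ℕ) :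
    ∑ p ∈ primesLE n, ((n / p : ℕ) : ℝ) * log p ≤ log (n ! : ℕ) := by
  rw [Real.log_nat_eq_sum_factorization, Finsupp.sum, Nat.support_factorization]
  calc ∑ p ∈ primesLE n, ((n / p : ℕ) : ℝ) * log p
      ≤ ∑ p ∈ primesLE n, (((n !).factorization p : ℕ) : ℝ) * log p := by
        gcongr with p hp
        exact (Nat.prime_of_mem_primesLE hp).div_le_factorization_factorial n
    _ ≤ ∑ p ∈ (n !).primeFactors, (((n !).factorization p : ℕ) : ℝ) * log p := by
        refine sum_le_sum_of_subset_of_nonneg (fun p hp => ?_) (fun p _ _ => by positivity)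
        obtain ⟨hpn, hp⟩ := mem_primesLE.mp hp
        exact Nat.mem_primeFactors.mpr ⟨hp, Nat.dvd_factorial hp.pos hpn, Nat.factorial_ne_zero n⟩

/-- Mertens' first theorem, upper bound. -/
theorem sum_primesLE_log_div_le (n : ℕ) :
    ∑ p ∈ primesLE n, log p / p ≤ log n + log 4 := by
  rcases n.eq_zero_or_pos with rfl | hn
  · simpa [Nat.primesLE_zero] using log_nonneg (by norm_num : (1 : ℝ) ≤ 4)
  have hn' : (0 : ℝ) < n := by exact_mod_cast hn
  have hfloor : ∀ p ∈ primesLE n, n * (log p / p) ≤ ((n / p : ℕ) : ℝ) * log p + log p := by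
    intro p hp
    have : (n : ℝ) / p ≤ (n / p : ℕ) + 1 := by
      rw [← Nat.floor_div_eq_div (K := ℝ)]; exact (Nat.lt_floor_add_one _).le
    calc (n : ℝ) * (log p / p) = (n / p) * log p := by ring
      _ ≤ ((n / p : ℕ) + 1) * log p := by gcongr
      _ = _ := by ring
  have hfact : log (n ! : ℕ) ≤ n * log n := by
    rw [← Real.log_pow]
    exact log_le_log (by positivity) (by exact_mod_cast Nat.factorial_le_pow n)
  have htheta := Chebyshev.theta_le_log4_mul_x (Nat.cast_nonneg (α := ℝ) n)
  rw [Chebyshev.theta_eq_sum_primesLE_log] at htheta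
  refine le_of_mul_le_mul_left ?_ hn'
  calc n * ∑ p ∈ primesLE n, log p / p
      ≤ ∑ p ∈ primesLE n, ((n / p : ℕ) : ℝ) * log p + ∑ p ∈ primesLE n, log p := by
        rw [mul_sum, ← sum_add_distrib]; exact sum_le_sum hfloor
    _ ≤ n * (log n + log 4) := by
        linarith [sum_primesLE_div_mul_log_le_log_factorial n]

theorem sub_one_mul_inv_sub_inv_le_log_sub_log {a b u : ℝ} (ha : 0 < a) (hab : a ≤ b)
    (hu : u ≤ a) : (u - 1) * (a⁻¹ - b⁻¹) ≤ log b - log a := by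
  have hb : 0 < b := ha.trans_le hab
  have hinv : 0 ≤ a⁻¹ - b⁻¹ := sub_nonneg.mpr (inv_anti₀ ha hab)
  calc (u - 1) * (a⁻¹ - b⁻¹) ≤ (a - 1) * (a⁻¹ - b⁻¹) := by gcongr
    _ ≤ 1 - (b / a)⁻¹ := by
        rw [inv_div]; field_simp; nlinarith
    _ ≤ log (b / a) := one_sub_inv_le_log_of_pos (div_pos hb ha)
    _ = log b - log a := log_div hb.ne' ha.ne'

-- The slack in partial summation of `∑_{p ≤ N} 1/p` against `∑_{p ≤ N} log p / p ≤ log N + log 4`.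
noncomputable def mertensGap (N : ℕ) : ℝ :=
  (∑ p ∈ primesLE N, log p / p - log 4 - 1) / log N + log (log N) - ∑ p ∈ primesLE N, (p : ℝ)⁻¹

theorem mertensGap_le_succ {N : ℕ} (hN : 2 ≤ N) : mertensGap N ≤ mertensGap (N + 1) := by
  have ha : 0 < log N := log_pos (by exact_mod_cast hN)
  have hab : log N ≤ log (N + 1) := log_le_log (by positivity) (by linarith)
  have hb : log (N + 1) ≠ 0 := (ha.trans_le hab).ne'
  -- a new prime `N + 1` adds `1 / (N + 1)` to both `∑ 1/p` and `(∑ log p / p) / log (N + 1)`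
  have hshift : (∑ p ∈ primesLE (N + 1), log p / p - log 4 - 1) / log (N + 1)
      - ∑ p ∈ primesLE (N + 1), (p : ℝ)⁻¹
      = (∑ p ∈ primesLE N, log p / p - log 4 - 1) / log (N + 1) - ∑ p ∈ primesLE N, (p : ℝ)⁻¹ := by
    rw [Nat.primesLE_succ]
    split_ifs
    · rw [sum_insert (Nat.notMem_primesLE N), sum_insert (Nat.notMem_primesLE N)]
      push_cast
      field_simp
      ring
    · rfl
  have hstep := sub_one_mul_inv_sub_inv_le_log_sub_log ha hab
    (u := ∑ p ∈ primesLE N, log p / p - log 4) (by linarith [sum_primesLE_log_div_le N])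
  calc mertensGap N
      = (∑ p ∈ primesLE N, log p / p - log 4 - 1) / log N + log (log N)
        - ∑ p ∈ primesLE N, (p : ℝ)⁻¹ := rfl
    _ ≤ (∑ p ∈ primesLE N, log p / p - log 4 - 1) / log (N + 1) + log (log (N + 1))
        - ∑ p ∈ primesLE N, (p : ℝ)⁻¹ := by
      rw [div_eq_mul_inv, div_eq_mul_inv]; linarith
    _ = mertensGap (N + 1) := by rw [mertensGap, Nat.cast_succ]; linarith

/-- Mertens' second theorem, upper bound. -/
theorem exists_sum_primesLE_inv_le_log_log :
    ∃ B, ∀ N ≥ 2, ∑ p ∈ primesLE N, (p : ℝ)⁻¹ ≤ log (log N) + B := by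
  refine ⟨1 - mertensGap 2, fun N hN => ?_⟩
  have hgap : mertensGap 2 ≤ mertensGap N := by
    induction N, hN using Nat.le_induction with
    | base => exact le_rfl
    | succ N hN ih => exact ih.trans (mertensGap_le_succ hN)
  have hlog : 0 < log N := log_pos (by exact_mod_cast hN)
  have hW : (∑ p ∈ primesLE N, log p / p - log 4 - 1) / log N ≤ 1 := by
    rw [div_le_one hlog]; linarith [sum_primesLE_log_div_le N]
  unfold mertensGap at hgap ⊢
  linarith

theorem exists_sum_primesLE_inv_sub_two_le_log_log :
    ∃ B, ∀ N ≥ 2,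
      ∑ p ∈ (primesLE N).filter (fun p => 2 < p), ((p : ℝ) - 2)⁻¹ ≤ log (log N) + B := by
  obtain ⟨B, hB⟩ := exists_sum_primesLE_inv_le_log_log
  refine ⟨B + 12, fun N hN => ?_⟩
  have hterm : ∀ p ∈ (primesLE N).filter (fun p => 2 < p),
      ((p : ℝ) - 2)⁻¹ ≤ (p : ℝ)⁻¹ + 6 * ((p : ℝ) ^ 2)⁻¹ := by
    intro p hp
    have hp3 : (3 : ℝ) ≤ p := by exact_mod_cast (mem_filter.mp hp).2
    rw [inv_le_comm₀ (by linarith) (by positivity)]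
    field_simp
    nlinarith
  have hsq : ∑ p ∈ primesLE N, ((p : ℝ) ^ 2)⁻¹ ≤ 2 := by
    refine (sum_le_sum_of_subset_of_nonneg (fun p hp => ?_) (fun _ _ _ => by positivity)).trans
      (by simpa using sum_Ioo_inv_sq_le (α := ℝ) 0 (N + 1))
    obtain ⟨hpN, hp⟩ := mem_primesLE.mp hp
    exact mem_Ioo.mpr ⟨hp.pos, Nat.lt_succ_of_le hpN⟩
  calc ∑ p ∈ (primesLE N).filter (fun p => 2 < p), ((p : ℝ) - 2)⁻¹
      ≤ ∑ p ∈ (primesLE N).filter (fun p => 2 < p), ((p : ℝ)⁻¹ + 6 * ((p : ℝ) ^ 2)⁻¹) :=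
        sum_le_sum hterm
    _ ≤ ∑ p ∈ primesLE N, ((p : ℝ)⁻¹ + 6 * ((p : ℝ) ^ 2)⁻¹) :=
        sum_le_sum_of_subset_of_nonneg (filter_subset _ _) (fun _ _ _ => by positivity)
    _ = ∑ p ∈ primesLE N, (p : ℝ)⁻¹ + 6 * ∑ p ∈ primesLE N, ((p : ℝ) ^ 2)⁻¹ := by
        rw [sum_add_distrib, mul_sum]
    _ ≤ log (log N) + (B + 12) := by linarith [hB N hN]

theorem card_filter_primeFactors_le_log {d : ℕ} (hd : d ≠ 0) :
    ((d.primeFactors.filter (fun p => 2 < p)).card : ℝ) ≤ log d := by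
  set P := d.primeFactors.filter (fun p => 2 < p)
  have hpow : 3 ^ P.card ≤ d :=
    (pow_card_le_prod P id 3 fun p hp => (mem_filter.mp hp).2).trans <| Nat.le_of_dvd
      (Nat.pos_of_ne_zero hd) ((prod_dvd_prod_of_subset _ _ id (filter_subset _ _)).trans
        (Nat.prod_primeFactors_dvd d))
  calc (P.card : ℝ) ≤ P.card * log 3 :=
        le_mul_of_one_le_right (Nat.cast_nonneg _) (by linarith [log_three_gt_d9])
    _ = log ((3 : ℕ) ^ P.card : ℕ) := by push_cast; rw [log_pow]
    _ ≤ log d := log_le_log (by positivity) (by exact_mod_cast hpow)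

theorem sum_filter_primeFactors_inv_sub_two_le_one {d K : ℕ} {y : ℝ} (hd : d ≠ 0) (hy : 0 < y)
    (hdy : log d ≤ y) (hKy : y + 1 ≤ K) :
    ∑ p ∈ (d.primeFactors.filter (fun p => 2 < p)).filter (fun p => K < p), ((p : ℝ) - 2)⁻¹
      ≤ 1 := by
  set P := d.primeFactors.filter (fun p => 2 < p)
  have hterm : ∀ p ∈ P.filter (fun p => K < p), ((p : ℝ) - 2)⁻¹ ≤ y⁻¹ := by
    intro p hp
    have : (K : ℝ) + 1 ≤ p := by exact_mod_cast (mem_filter.mp hp).2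
    exact inv_anti₀ hy (by linarith)
  calc ∑ p ∈ P.filter (fun p => K < p), ((p : ℝ) - 2)⁻¹
      ≤ (P.filter (fun p => K < p)).card • y⁻¹ := sum_le_card_nsmul _ _ _ hterm
    _ ≤ P.card * y⁻¹ := by rw [nsmul_eq_mul]; gcongr; exact filter_subset _ _
    _ ≤ y * y⁻¹ := by gcongr; exact (card_filter_primeFactors_le_log hd).trans hdy
    _ = 1 := mul_inv_cancel₀ hy.ne'

theorem prod_div_sub_two_le_exp {s : Finset ℕ} (hs : ∀ p ∈ s, 2 < p) :
    ∏ p ∈ s, (p : ℝ) / (p - 2) ≤ exp (2 * ∑ p ∈ s, ((p : ℝ) - 2)⁻¹) := by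
  rw [mul_sum, exp_sum]
  refine prod_le_prod (fun p hp => ?_) (fun p hp => ?_)
  all_goals have : (2 : ℝ) < p := by exact_mod_cast hs p hp
  · exact div_nonneg (by linarith) (by linarith)
  · calc (p : ℝ) / (p - 2) = 2 * ((p : ℝ) - 2)⁻¹ + 1 := by
          field_simp [(by linarith : (p : ℝ) - 2 ≠ 0)]
          ring
      _ ≤ exp (2 * ((p : ℝ) - 2)⁻¹) := add_one_le_exp _

theorem two_le_log_ten_mul {d : ℕ} (hd : d ≠ 0) : 2 ≤ log (10 * d) := by
  have hd1 : (1 : ℝ) ≤ d := by exact_mod_cast Nat.one_le_iff_ne_zero.mpr hd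
  rw [le_log_iff_exp_le (by positivity), show (2 : ℝ) = 1 + 1 by norm_num, exp_add]
  nlinarith [exp_one_lt_d9, exp_pos 1]

theorem exists_sum_filter_primeFactors_inv_sub_two_le_log_log_log :
    ∃ B, ∀ d : ℕ, d ≠ 0 →
      ∑ p ∈ d.primeFactors.filter (fun p => 2 < p), ((p : ℝ) - 2)⁻¹
        ≤ log (log (log (10 * d))) + B := by
  obtain ⟨B, hB⟩ := exists_sum_primesLE_inv_sub_two_le_log_log
  refine ⟨B + log 2 + 1, fun d hd => ?_⟩
  set P := d.primeFactors.filter (fun p => 2 < p)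
  set L := log (10 * d)
  set K := ⌈L⌉₊ + 1
  have hL := two_le_log_ten_mul hd
  have hK : L + 1 ≤ K := by push_cast [K]; linarith [Nat.le_ceil L]
  have hK' : (K : ℝ) ≤ L ^ 2 := by
    push_cast [K]; nlinarith [Nat.ceil_lt_add_one (by linarith : (0 : ℝ) ≤ L)]
  have hloglogK : log (log K) ≤ log 2 + log (log L) := by
    have hlogL : 0 < log L := log_pos (by linarith)
    rw [← log_mul two_ne_zero hlogL.ne', ← log_rpow (by linarith), rpow_two]
    exact log_le_log (log_pos (by linarith)) (log_le_log (by linarith) hK')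
  have htail := sum_filter_primeFactors_inv_sub_two_le_one hd (by linarith : 0 < L)
    (log_le_log (by positivity) (by linarith)) hK
  have hhead : ∑ p ∈ P.filter (fun p => ¬ K < p), ((p : ℝ) - 2)⁻¹ ≤ log (log K) + B := by
    refine (sum_le_sum_of_subset_of_nonneg (fun p hp => ?_) (fun p hp _ => ?_)).trans
      (hB K (by have := Nat.ceil_pos.mpr (by linarith : 0 < L); omega))
    · obtain ⟨hpP, hpK⟩ := mem_filter.mp hp
      obtain ⟨hpd, hp2⟩ := mem_filter.mp hpP
      exact mem_filter.mpr
        ⟨mem_primesLE.mpr ⟨not_lt.mp hpK, Nat.prime_of_mem_primeFactors hpd⟩, hp2⟩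
    · have : (2 : ℝ) < p := by exact_mod_cast (mem_filter.mp hp).2
      exact inv_nonneg.mpr (by linarith)
  rw [← sum_filter_add_sum_filter_not P (fun p => K < p)]
  linarith

theorem exists_prod_filter_primeFactors_div_sub_two_le :
    ∃ C > 0, ∀ d : ℕ, d ≠ 0 →
      ∏ p ∈ d.primeFactors.filter (fun p => 2 < p), (p : ℝ) / (p - 2)
        ≤ C * log (log (10 * d)) ^ 2 := by
  obtain ⟨B, hB⟩ := exists_sum_filter_primeFactors_inv_sub_two_le_log_log_log
  refine ⟨exp (2 * B), exp_pos _, fun d hd => ?_⟩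
  have hlogL : 0 < log (log (10 * d)) := log_pos (by linarith [two_le_log_ten_mul hd])
  calc ∏ p ∈ d.primeFactors.filter (fun p => 2 < p), (p : ℝ) / (p - 2)
      ≤ exp (2 * (log (log (log (10 * d))) + B)) :=
        (prod_div_sub_two_le_exp fun p hp => (mem_filter.mp hp).2).trans (by gcongr; exact hB d hd)
    _ = exp (2 * B) * log (log (10 * d)) ^ 2 := by
        rw [mul_add, exp_add, ← log_rpow hlogL, exp_log (by positivity), rpow_two, mul_comm]

theorem abs_chi_le_one (d : ℕ) : |chi d| ≤ 1 := by
  unfold chi; split_ifs <;> norm_num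

theorem chi_eq_zero_of_even {d : ℕ} (hd : Even d) : chi d = 0 := by
  obtain ⟨k, rfl⟩ := hd
  rw [chi, if_neg (by omega), if_neg (by omega)]

theorem one_le_lam (k : ℕ) : 1 ≤ lam k :=
  one_le_prod fun p hp => by
    have : (2 : ℝ) < p := by exact_mod_cast (mem_filter.mp hp).2
    rw [le_div_iff₀ (by linarith)]
    linarith

theorem abs_f_le_lam_div_totient (n d : ℕ) : |f n d| ≤ lam d / Nat.totient d := by
  have hlam := one_le_lam d
  have hlam' := one_le_lam (Nat.gcd n d)
  rw [f, abs_mul, abs_div, abs_div, Nat.abs_cast, abs_of_pos (by linarith : 0 < lam d),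
    abs_of_pos (by linarith : 0 < lam (Nat.gcd n d))]
  calc |chi d| / Nat.totient d * (lam d / lam (Nat.gcd n d))
      ≤ 1 / Nat.totient d * (lam d / 1) := by
        gcongr
        exact abs_chi_le_one d
    _ = lam d / Nat.totient d := by ring

theorem lam_div_totient_of_odd {d : ℕ} (hd : Odd d) :
    lam d / Nat.totient d
      = (∏ p ∈ d.primeFactors.filter (fun p => 2 < p), (p : ℝ) / (p - 2)) / d := by
  have htwo_lt : ∀ p ∈ d.primeFactors, 2 < p := fun p hp =>
    (Nat.prime_of_mem_primeFactors hp).two_le.lt_of_ne' fun h =>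
      Nat.not_even_iff_odd.mpr hd (even_iff_two_dvd.mpr (h ▸ Nat.dvd_of_mem_primeFactors hp))
  have htot : (Nat.totient d : ℝ) = d * ∏ p ∈ d.primeFactors, (1 - (p : ℝ)⁻¹) := by
    have := congrArg (Rat.cast (K := ℝ)) (Nat.totient_eq_mul_prod_factors d)
    push_cast at this
    exact this
  rw [lam, filter_true_of_mem htwo_lt, htot, div_mul_eq_div_div_swap, ← prod_div_distrib]
  congr 1
  refine prod_congr rfl fun p hp => ?_
  have : (2 : ℝ) < p := by exact_mod_cast htwo_lt p hp
  have : (p : ℝ) - 1 ≠ 0 := by linarith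
  field_simp [(by linarith : (p : ℝ) - 2 ≠ 0)]

/-- Uniformly in `n`, `|f_n(d)| ≪ (log log (10 d))² / d`. -/
theorem f_bound :
    ∃ C > 0, ∀ n d : ℕ, 0 < n → 0 < d →
      |f n d| ≤ C * (Real.log (Real.log (10 * d))) ^ 2 / d := by
  obtain ⟨C, hC, hprod⟩ := exists_prod_filter_primeFactors_div_sub_two_le
  refine ⟨C, hC, fun n d _ hd => ?_⟩
  rcases Nat.even_or_odd d with hev | hodd
  · rw [f, chi_eq_zero_of_even hev, zero_div, zero_mul, abs_zero]
    positivity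
  · calc |f n d| ≤ lam d / Nat.totient d := abs_f_le_lam_div_totient n d
      _ = (∏ p ∈ d.primeFactors.filter (fun p => 2 < p), (p : ℝ) / (p - 2)) / d :=
        lam_div_totient_of_odd hodd
      _ ≤ C * (Real.log (Real.log (10 * d))) ^ 2 / d := by
        gcongr
        exact hprod d hd.ne'
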